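/- arXiv:1808.10297 — 3 statements merged into one kernel-verified Lean document; each statement's English description precedes it below -/
import Mathlib

section
/- Let d ≥ 1, β_1, β_2 ∈ (0,1), and p, p_1, p_2 ∈ [1,∞] with 1/p = 1/p_1 + 1/p_2, and let ω be a standard mollifier on ℝ^d. There is a constant C, depending only on d, such that for all measurable g_1, g_2 : T^d → ℝ with g_1 ∈ L^{p_1}(T^d), g_2 ∈ L^{p_2}(T^d), and all 0 < ε ≤ δ, one has ‖(g_1 g_2) ⋆ ω_ε − (g_1 ⋆ ω_ε)(g_2 ⋆ ω_ε)‖_{L^p(T^d)} ≤ C ε^{β_1+β_2} ‖ω‖_{L^{p/(p−1)}} ‖g_1‖_{V_δ^{β_1,p_1}(T^d)} ‖g_2‖_{V_δ^{β_2,p_2}(T^d)}. -/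
/-!
Write `ρ = ω_ε(y) dy`, a probability measure carried by the ball `|y| < ε`, and
`Δ_y g(x) = g(x - y) - g(x)`. Since `ρ` has mass one, the commutator
`(g₁ g₂) ⋆ ω_ε - (g₁ ⋆ ω_ε)(g₂ ⋆ ω_ε)` equals
`∫ Δ_y g₁ Δ_y g₂ dρ(y) - (∫ Δ_y g₁ dρ)(∫ Δ_y g₂ dρ)`, a covariance, which does not see the
constants `g₁(x), g₂(x)`. Minkowski's integral inequality and Hölder's inequality bound both
terms in `L^p` by `sup_{|y|<ε} ‖Δ_y g₁‖_{p₁} ‖Δ_y g₂‖_{p₂}`, which is at most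
`ε^{β₁+β₂} ‖g₁‖_{V_δ^{β₁,p₁}} ‖g₂‖_{V_δ^{β₂,p₂}}` because `ε ≤ δ`. Finally
`∫ ω = 1` and `supp ω ⊆ B₁` give `1 ≤ max(1, |B₁|) ‖ω‖_q` by Hölder, whence
`C = 2 max(1, |B₁|)`. Periodicity enters only to make the convolution integrals finite
for a.e. `x`, translations preserving integrals over the unit cube.
-/

open MeasureTheory Set Filter ENNReal

noncomputable section

abbrev Ed (d : ℕ) := EuclideanSpace ℝ (Fin d)

def unitCube (d : ℕ) : Set (Ed d) := {x | ∀ i, x i ∈ Set.Ico (0:ℝ) 1}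

def torusMeasure (d : ℕ) : Measure (Ed d) := (volume : Measure (Ed d)).restrict (unitCube d)

def intVec {d : ℕ} (k : Fin d → ℤ) : Ed d := WithLp.toLp 2 (fun i => (k i : ℝ))

def PeriodicF {d : ℕ} {F : Type*} (f : Ed d → F) : Prop :=
  ∀ (x : Ed d) (k : Fin d → ℤ), f (x + intVec k) = f x

def tLp (d : ℕ) (p : ℝ≥0∞) {F : Type*} [NormedAddCommGroup F] (f : Ed d → F) : ℝ≥0∞ :=
  eLpNorm f p (torusMeasure d)

def Vnorm (d : ℕ) (β δ : ℝ) (p : ℝ≥0∞) {F : Type*} [NormedAddCommGroup F] (f : Ed d → F) : ℝ≥0∞ :=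
  ⨆ (h : Ed d) (_ : 0 < ‖h‖ ∧ ‖h‖ < δ),
    ENNReal.ofReal (‖h‖ ^ (-β)) * tLp d p (fun x => f (x + h) - f x)

structure IsMollifier (d : ℕ) (ω : Ed d → ℝ) : Prop where
  smooth : ContDiff ℝ (⊤ : ℕ∞) ω
  nonneg : ∀ x, 0 ≤ ω x
  support_subset : Function.support ω ⊆ Metric.closedBall 0 1
  integral_one : ∫ x, ω x = 1

def mollKer (d : ℕ) (ω : Ed d → ℝ) (ε : ℝ) (x : Ed d) : ℝ := ε⁻¹ ^ d * ω (ε⁻¹ • x)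

def moll (d : ℕ) (ω : Ed d → ℝ) (ε : ℝ) {F : Type*} [NormedAddCommGroup F] [NormedSpace ℝ F]
    (f : Ed d → F) (x : Ed d) : F := ∫ y, mollKer d ω ε y • f (x - y)

def pd (d : ℕ) {F : Type*} [NormedAddCommGroup F] [NormedSpace ℝ F] (f : Ed d → F) (i : Fin d)
    (x : Ed d) : F := fderiv ℝ f x (EuclideanSpace.single i 1)

def divg (d : ℕ) (v : Ed d → Ed d) (x : Ed d) : ℝ := ∑ i, pd d v i x i

def stMeasure (d : ℕ) (T : ℝ) : Measure (ℝ × Ed d) :=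
  ((volume : Measure ℝ).restrict (Set.Ioo 0 T)).prod (torusMeasure d)

def stLp (d : ℕ) (T : ℝ) (p : ℝ≥0∞) {F : Type*} [NormedAddCommGroup F] (f : ℝ → Ed d → F) : ℝ≥0∞ :=
  eLpNorm (fun q : ℝ × Ed d => f q.1 q.2) p (stMeasure d T)

def LqV (d : ℕ) (T q β δ : ℝ) (p : ℝ≥0∞) {F : Type*} [NormedAddCommGroup F]
    (f : ℝ → Ed d → F) : ℝ≥0∞ :=
  (∫⁻ t in Set.Ioo 0 T, (Vnorm d β δ p (f t)) ^ q) ^ (1/q)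

def LinfV (d : ℕ) (T β δ : ℝ) (p : ℝ≥0∞) {F : Type*} [NormedAddCommGroup F]
    (f : ℝ → Ed d → F) : ℝ≥0∞ :=
  essSup (fun t => Vnorm d β δ p (f t)) ((volume : Measure ℝ).restrict (Set.Ioo 0 T))

end

section Torus

variable {d : ℕ}

noncomputable def intLattice (d : ℕ) : Submodule ℤ (Ed d) :=
  Submodule.span ℤ (Set.range (EuclideanSpace.basisFun (Fin d) ℝ).toBasis)

lemma exists_eq_intVec_of_mem_intLattice {v : Ed d} (hv : v ∈ intLattice d) :
    ∃ k, v = intVec k := by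
  rw [intLattice, Module.Basis.mem_span_iff_repr_mem] at hv
  choose k hk using hv
  refine ⟨k, ?_⟩
  ext i
  simpa [intVec, EuclideanSpace.basisFun_repr] using (hk i).symm

lemma isAddFundamentalDomain_unitCube :
    IsAddFundamentalDomain (intLattice d).toAddSubgroup (unitCube d) volume := by
  have hcube :
      unitCube d = ZSpan.fundamentalDomain (EuclideanSpace.basisFun (Fin d) ℝ).toBasis := by
    ext x
    simp [unitCube, ZSpan.mem_fundamentalDomain, EuclideanSpace.basisFun_repr]
  rw [hcube]
  exact ZSpan.isAddFundamentalDomain' _ volume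

lemma lintegral_torusMeasure_comp_add {G : Ed d → ℝ≥0∞} (hG : PeriodicF G) (h : Ed d) :
    ∫⁻ x, G (x + h) ∂torusMeasure d = ∫⁻ x, G x ∂torusMeasure d := by
  have : Countable (intLattice d) :=
    ((Set.countable_range (intVec (d := d))).mono fun _ hv =>
      (exists_eq_intVec_of_mem_intLattice hv).imp fun _ hk => hk.symm).to_subtype
  have hs := isAddFundamentalDomain_unitCube (d := d)
  rw [torusMeasure, ← (hs.vadd_of_comm h).setLIntegral_eq hs G ?_]
  · rw [← Set.image_vadd, ← (measurePreserving_vadd h volume).setLIntegral_comp_emb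
      (MeasurableEquiv.addLeft h).measurableEmbedding]
    simp_rw [vadd_eq_add, add_comm h]
  · rintro ⟨v, hv⟩ x
    obtain ⟨k, rfl⟩ := exists_eq_intVec_of_mem_intLattice hv
    exact (congrArg G (add_comm _ _)).trans (hG x k)

lemma volume_unitCube : volume (unitCube d) = 1 := by
  have hcube : unitCube d = (MeasurableEquiv.toLp 2 (Fin d → ℝ)).symm ⁻¹'
      Set.univ.pi fun _ => Set.Ico (0 : ℝ) 1 := by
    ext x
    simp [unitCube, Set.mem_pi]
  rw [hcube, (EuclideanSpace.volume_preserving_symm_measurableEquiv_toLp (Fin d)).measure_preimage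
    (MeasurableSet.univ_pi fun _ => measurableSet_Ico).nullMeasurableSet, volume_pi_pi]
  simp [Real.volume_Ico]

instance : IsProbabilityMeasure (torusMeasure d) :=
  ⟨by rw [torusMeasure, Measure.restrict_apply_univ, volume_unitCube]⟩

lemma ae_integrable_comp_sub {g : Ed d → ℝ} (hg : Measurable g) (hper : PeriodicF g)
    (hint : Integrable g (torusMeasure d)) (ρ : Measure (Ed d)) [IsFiniteMeasure ρ] :
    ∀ᵐ x ∂torusMeasure d, Integrable (fun y => g (x - y)) ρ := by
  have hgz : Measurable fun z : Ed d × Ed d => g (z.1 - z.2) :=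
    hg.comp (measurable_fst.sub measurable_snd)
  refine Integrable.prod_right_ae (f := fun z => g (z.1 - z.2)) ⟨hgz.aestronglyMeasurable, ?_⟩
  have hshift (y : Ed d) :
      ∫⁻ x, ‖g (x - y)‖ₑ ∂torusMeasure d = ∫⁻ x, ‖g x‖ₑ ∂torusMeasure d := by
    simpa only [sub_eq_add_neg] using lintegral_torusMeasure_comp_add (G := fun x => ‖g x‖ₑ)
      (fun x k => by simp only [hper x k]) (-y)
  rw [HasFiniteIntegral, lintegral_prod_symm _ hgz.enorm.aemeasurable]
  simp only [hshift, lintegral_const]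
  exact ENNReal.mul_lt_top hint.2 (measure_lt_top ρ _)

lemma eLpNorm_comp_sub_sub_le_Vnorm {g : Ed d → ℝ} {β δ ε : ℝ} (hβ : 0 ≤ β) {p : ℝ≥0∞}
    {y : Ed d} (hyε : ‖y‖ ≤ ε) (hyδ : ‖y‖ < δ) :
    eLpNorm (fun x => g (x - y) - g x) p (torusMeasure d)
      ≤ ENNReal.ofReal (ε ^ β) * Vnorm d β δ p g := by
  rcases eq_or_ne y 0 with rfl | hy
  · simp
  have hy0 : 0 < ‖y‖ := norm_pos_iff.2 hy
  have hV : ENNReal.ofReal (‖-y‖ ^ (-β)) * tLp d p (fun x => g (x + -y) - g x)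
      ≤ Vnorm d β δ p g :=
    le_iSup₂ (f := fun (h : Ed d) (_ : 0 < ‖h‖ ∧ ‖h‖ < δ) =>
      ENNReal.ofReal (‖h‖ ^ (-β)) * tLp d p (fun x => g (x + h) - g x)) (-y)
      (by rw [norm_neg]; exact ⟨hy0, hyδ⟩)
  rw [norm_neg] at hV
  have hcancel : ENNReal.ofReal (‖y‖ ^ β) * ENNReal.ofReal (‖y‖ ^ (-β)) = 1 := by
    rw [← ENNReal.ofReal_mul (by positivity), ← Real.rpow_add hy0, add_neg_cancel,
      Real.rpow_zero, ENNReal.ofReal_one]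
  calc eLpNorm (fun x => g (x - y) - g x) p (torusMeasure d)
      = ENNReal.ofReal (‖y‖ ^ β) *
          (ENNReal.ofReal (‖y‖ ^ (-β)) * tLp d p (fun x => g (x + -y) - g x)) := by
        simp only [← mul_assoc, hcancel, one_mul, tLp, sub_eq_add_neg]
    _ ≤ ENNReal.ofReal (ε ^ β) * Vnorm d β δ p g := by gcongr

end Torus

section KernelEstimates

variable {α β E : Type*} [MeasurableSpace α] [MeasurableSpace β] [NormedAddCommGroup E]
  [NormedSpace ℝ E] {μ : Measure α} {ν : Measure β} [SFinite μ] [IsProbabilityMeasure ν]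

lemma eLpNorm_top_integral_le_of_ae_eLpNorm_top_le {F : α → β → E}
    (hF : StronglyMeasurable (Function.uncurry F)) {M : ℝ≥0∞}
    (hM : ∀ᵐ y ∂ν, eLpNorm (fun x => F x y) ∞ μ ≤ M) :
    eLpNorm (fun x => ∫ y, F x y ∂ν) ∞ μ ≤ M := by
  have hM' : ∀ᵐ y ∂ν, ∀ᵐ x ∂μ, ‖F x y‖ₑ ≤ M := by
    filter_upwards [hM] with y hy
    filter_upwards [enorm_ae_le_eLpNormEssSup (fun x => F x y) μ] with x hx
    exact hx.trans (by rwa [← eLpNorm_exponent_top])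
  have hM'' : ∀ᵐ x ∂μ, ∀ᵐ y ∂ν, ‖F x y‖ₑ ≤ M :=
    (Measure.ae_ae_comm (p := fun x y => ‖F x y‖ₑ ≤ M)
      (measurableSet_le hF.enorm measurable_const)).2 hM'
  rw [eLpNorm_exponent_top]
  refine eLpNormEssSup_le_of_ae_enorm_bound ?_
  filter_upwards [hM''] with x hx
  calc ‖∫ y, F x y ∂ν‖ₑ ≤ ∫⁻ y, ‖F x y‖ₑ ∂ν := enorm_integral_le_lintegral_enorm _
    _ ≤ ∫⁻ _, M ∂ν := lintegral_mono_ae hx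
    _ = M := by simp

lemma eLpNorm_integral_le_of_ae_eLpNorm_le {p : ℝ≥0∞} (hp : 1 ≤ p) {F : α → β → E}
    (hF : StronglyMeasurable (Function.uncurry F)) {M : ℝ≥0∞}
    (hM : ∀ᵐ y ∂ν, eLpNorm (fun x => F x y) p μ ≤ M) :
    eLpNorm (fun x => ∫ y, F x y ∂ν) p μ ≤ M := by
  rcases eq_or_ne p ∞ with rfl | hp_top
  · exact eLpNorm_top_integral_le_of_ae_eLpNorm_top_le hF hM
  have hp0 : p ≠ 0 := (zero_lt_one.trans_le hp).ne'
  have hr : 0 < p.toReal := ENNReal.toReal_pos hp0 hp_top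
  have hJensen : ∀ x, ‖∫ y, F x y ∂ν‖ₑ ^ p.toReal ≤ ∫⁻ y, ‖F x y‖ₑ ^ p.toReal ∂ν := by
    intro x
    rw [lintegral_rpow_enorm_eq_rpow_eLpNorm' hr, ← eLpNorm_eq_eLpNorm' hp0 hp_top]
    gcongr
    calc ‖∫ y, F x y ∂ν‖ₑ ≤ eLpNorm (F x) 1 ν := by
          rw [eLpNorm_one_eq_lintegral_enorm]; exact enorm_integral_le_lintegral_enorm _
      _ ≤ eLpNorm (F x) p ν := eLpNorm_le_eLpNorm_of_exponent_le hp
          (hF.comp_measurable measurable_prodMk_left).aestronglyMeasurable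
  have hM_r : ∀ᵐ y ∂ν, ∫⁻ x, ‖F x y‖ₑ ^ p.toReal ∂μ ≤ M ^ p.toReal := by
    filter_upwards [hM] with y hy
    rw [lintegral_rpow_enorm_eq_rpow_eLpNorm' hr, ← eLpNorm_eq_eLpNorm' hp0 hp_top]
    gcongr
  rw [eLpNorm_eq_eLpNorm' hp0 hp_top, eLpNorm']
  calc (∫⁻ x, ‖∫ y, F x y ∂ν‖ₑ ^ p.toReal ∂μ) ^ (1 / p.toReal)
      ≤ (∫⁻ x, ∫⁻ y, ‖F x y‖ₑ ^ p.toReal ∂ν ∂μ) ^ (1 / p.toReal) := by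
        gcongr with x; exact hJensen x
    _ = (∫⁻ y, ∫⁻ x, ‖F x y‖ₑ ^ p.toReal ∂μ ∂ν) ^ (1 / p.toReal) := by
        rw [lintegral_lintegral_swap (hF.enorm.pow_const _).aemeasurable]
    _ ≤ (∫⁻ _, M ^ p.toReal ∂ν) ^ (1 / p.toReal) := by
        gcongr 1; exact lintegral_mono_ae hM_r
    _ = M := by simp [← ENNReal.rpow_mul, hr.ne']

lemma integral_sub_mul_sub_sub_integral_mul_integral {a b : β → ℝ} (ha : Integrable a ν)
    (hb : Integrable b ν) (hab : Integrable (fun y => a y * b y) ν) (s t : ℝ) :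
    ∫ y, (a y - s) * (b y - t) ∂ν - (∫ y, (a y - s) ∂ν) * ∫ y, (b y - t) ∂ν
      = ∫ y, a y * b y ∂ν - (∫ y, a y ∂ν) * ∫ y, b y ∂ν := by
  have hexpand : (fun y => (a y - s) * (b y - t))
      = fun y => (a y * b y - t * a y) - (s * b y - s * t) := by
    funext y; ring
  have hab' : Integrable (fun y => a y * b y - t * a y) ν := hab.sub (ha.const_mul t)
  have hb' : Integrable (fun y => s * b y - s * t) ν := (hb.const_mul s).sub (integrable_const _)
  rw [hexpand, integral_sub hab' hb', integral_sub hab (ha.const_mul t),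
    integral_sub (hb.const_mul s) (integrable_const _), integral_sub ha (integrable_const _),
    integral_sub hb (integrable_const _), integral_const_mul, integral_const_mul]
  simp only [integral_const, probReal_univ, smul_eq_mul, one_mul]
  ring

lemma eLpNorm_integral_mul_sub_integral_mul_integral_le {p p₁ p₂ : ℝ≥0∞} [p₁.HolderTriple p₂ p]
    (hp : 1 ≤ p) (hp₁ : 1 ≤ p₁) (hp₂ : 1 ≤ p₂) {u₁ u₂ : α → β → ℝ} {g₁ g₂ : α → ℝ}
    (hu₁ : Measurable (Function.uncurry u₁)) (hu₂ : Measurable (Function.uncurry u₂))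
    (hg₁ : Measurable g₁) (hg₂ : Measurable g₂)
    (hint : ∀ᵐ x ∂μ, Integrable (u₁ x) ν ∧ Integrable (u₂ x) ν ∧
      Integrable (fun y => u₁ x y * u₂ x y) ν)
    {M₁ M₂ : ℝ≥0∞} (hM₁ : ∀ᵐ y ∂ν, eLpNorm (fun x => u₁ x y - g₁ x) p₁ μ ≤ M₁)
    (hM₂ : ∀ᵐ y ∂ν, eLpNorm (fun x => u₂ x y - g₂ x) p₂ μ ≤ M₂) :
    eLpNorm (fun x => ∫ y, u₁ x y * u₂ x y ∂ν - (∫ y, u₁ x y ∂ν) * ∫ y, u₂ x y ∂ν) p μ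
      ≤ 2 * (M₁ * M₂) := by
  set φ₁ : α → β → ℝ := fun x y => u₁ x y - g₁ x
  set φ₂ : α → β → ℝ := fun x y => u₂ x y - g₂ x
  have hφ₁ : StronglyMeasurable (Function.uncurry φ₁) :=
    (hu₁.sub (hg₁.comp measurable_fst)).stronglyMeasurable
  have hφ₂ : StronglyMeasurable (Function.uncurry φ₂) :=
    (hu₂.sub (hg₂.comp measurable_fst)).stronglyMeasurable
  have hcov : (fun x => ∫ y, u₁ x y * u₂ x y ∂ν - (∫ y, u₁ x y ∂ν) * ∫ y, u₂ x y ∂ν)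
      =ᵐ[μ] fun x => ∫ y, φ₁ x y * φ₂ x y ∂ν - (∫ y, φ₁ x y ∂ν) * ∫ y, φ₂ x y ∂ν := by
    filter_upwards [hint] with x ⟨h₁, h₂, h₁₂⟩
    exact (integral_sub_mul_sub_sub_integral_mul_integral h₁ h₂ h₁₂ _ _).symm
  have hU₁ : eLpNorm (fun x => ∫ y, φ₁ x y ∂ν) p₁ μ ≤ M₁ :=
    eLpNorm_integral_le_of_ae_eLpNorm_le hp₁ hφ₁ hM₁
  have hU₂ : eLpNorm (fun x => ∫ y, φ₂ x y ∂ν) p₂ μ ≤ M₂ :=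
    eLpNorm_integral_le_of_ae_eLpNorm_le hp₂ hφ₂ hM₂
  have hT : eLpNorm (fun x => ∫ y, φ₁ x y * φ₂ x y ∂ν) p μ ≤ M₁ * M₂ := by
    refine eLpNorm_integral_le_of_ae_eLpNorm_le hp (hφ₁.mul hφ₂) ?_
    filter_upwards [hM₁, hM₂] with y h₁ h₂
    exact (eLpNorm_smul_le_mul_eLpNorm
      (hφ₂.comp_measurable measurable_prodMk_right).aestronglyMeasurable
      (hφ₁.comp_measurable measurable_prodMk_right).aestronglyMeasurable).trans (mul_le_mul' h₁ h₂)
  have hU₁m := hφ₁.integral_prod_right (ν := ν)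
  have hU₂m := hφ₂.integral_prod_right (ν := ν)
  rw [eLpNorm_congr_ae hcov, two_mul]
  calc _ ≤ eLpNorm (fun x => ∫ y, φ₁ x y * φ₂ x y ∂ν) p μ
        + eLpNorm (fun x => (∫ y, φ₁ x y ∂ν) * ∫ y, φ₂ x y ∂ν) p μ :=
        eLpNorm_sub_le (hφ₁.mul hφ₂).integral_prod_right.aestronglyMeasurable
          (hU₁m.mul hU₂m).aestronglyMeasurable hp
    _ ≤ M₁ * M₂ + M₁ * M₂ := by
        gcongr
        exact (eLpNorm_smul_le_mul_eLpNorm hU₂m.aestronglyMeasurable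
          hU₁m.aestronglyMeasurable).trans (mul_le_mul' hU₁ hU₂)

end KernelEstimates

noncomputable def mollMeasure (d : ℕ) (ω : Ed d → ℝ) (ε : ℝ) : Measure (Ed d) :=
  volume.withDensity fun y => ENNReal.ofReal (mollKer d ω ε y)

namespace IsMollifier

variable {d : ℕ} {ω : Ed d → ℝ} {ε : ℝ}

lemma mollKer_nonneg (hω : IsMollifier d ω) (hε : 0 ≤ ε) (y : Ed d) : 0 ≤ mollKer d ω ε y :=
  mul_nonneg (pow_nonneg (inv_nonneg.2 hε) d) (hω.nonneg _)

lemma measurable_mollKer (hω : IsMollifier d ω) : Measurable (mollKer d ω ε) :=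
  (continuous_const.mul (hω.smooth.continuous.comp (continuous_const_smul ε⁻¹))).measurable

lemma integral_mollKer (hω : IsMollifier d ω) (hε : 0 < ε) : ∫ y, mollKer d ω ε y = 1 := by
  unfold mollKer
  rw [integral_const_mul, Measure.integral_comp_smul, finrank_euclideanSpace_fin,
    hω.integral_one, inv_pow, inv_inv, abs_of_pos (pow_pos hε d), smul_eq_mul, mul_one,
    inv_mul_cancel₀ (pow_pos hε d).ne']

lemma norm_le_of_mollKer_ne_zero (hω : IsMollifier d ω) (hε : 0 < ε) {y : Ed d}
    (hy : mollKer d ω ε y ≠ 0) : ‖y‖ ≤ ε := by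
  have hy' : ε⁻¹ • y ∈ Metric.closedBall 0 1 := hω.support_subset (right_ne_zero_of_mul hy)
  rw [mem_closedBall_zero_iff, norm_smul, norm_inv, Real.norm_of_nonneg hε.le] at hy'
  rwa [inv_mul_le_iff₀ hε, mul_one] at hy'

lemma isProbabilityMeasure_mollMeasure (hω : IsMollifier d ω) (hε : 0 < ε) :
    IsProbabilityMeasure (mollMeasure d ω ε) := by
  constructor
  rw [mollMeasure, withDensity_apply _ MeasurableSet.univ, Measure.restrict_univ,
    ← ofReal_integral_eq_lintegral_ofReal
      (Integrable.of_integral_ne_zero (by simp [hω.integral_mollKer hε]))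
      (Eventually.of_forall (hω.mollKer_nonneg hε.le)), hω.integral_mollKer hε,
    ENNReal.ofReal_one]

lemma ae_norm_lt_mollMeasure (hω : IsMollifier d ω) (hε : 0 < ε) :
    ∀ᵐ y ∂mollMeasure d ω ε, ‖y‖ < ε := by
  rw [mollMeasure, ae_withDensity_iff hω.measurable_mollKer.ennreal_ofReal]
  have hsphere : ∀ᵐ y ∂(volume : Measure (Ed d)), y ∉ Metric.sphere 0 ε :=
    measure_eq_zero_iff_ae_notMem.1 (Measure.addHaar_sphere_of_ne_zero _ _ hε.ne')
  filter_upwards [hsphere] with y hy hK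
  rw [mem_sphere_zero_iff_norm] at hy
  have hK' : 0 < mollKer d ω ε y := by simpa using hK
  exact (hω.norm_le_of_mollKer_ne_zero hε hK'.ne').lt_of_ne hy

lemma moll_eq_integral_mollMeasure (hω : IsMollifier d ω) (hε : 0 ≤ ε) {F : Type*}
    [NormedAddCommGroup F] [NormedSpace ℝ F] (f : Ed d → F) (x : Ed d) :
    moll d ω ε f x = ∫ y, f (x - y) ∂mollMeasure d ω ε := by
  refine Eq.symm ((integral_withDensity_eq_integral_smul
    (f := fun y => (mollKer d ω ε y).toNNReal) hω.measurable_mollKer.real_toNNReal _).trans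
    (integral_congr_ae (.of_forall fun y => ?_)))
  simp only [NNReal.smul_def, Real.coe_toNNReal _ (hω.mollKer_nonneg hε y)]

lemma ae_eLpNorm_comp_sub_sub_le_Vnorm (hω : IsMollifier d ω) (hε : 0 < ε) {δ : ℝ}
    (hεδ : ε ≤ δ) {g : Ed d → ℝ} {β : ℝ} (hβ : 0 ≤ β) (p : ℝ≥0∞) :
    ∀ᵐ y ∂mollMeasure d ω ε, eLpNorm (fun x => g (x - y) - g x) p (torusMeasure d)
      ≤ ENNReal.ofReal (ε ^ β) * Vnorm d β δ p g := by
  filter_upwards [hω.ae_norm_lt_mollMeasure hε] with y hy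
  exact eLpNorm_comp_sub_sub_le_Vnorm hβ hy.le (hy.trans_le hεδ)

end IsMollifier

lemma ENNReal.rpow_le_max_one {x : ℝ≥0∞} {e : ℝ} (he₀ : 0 ≤ e) (he₁ : e ≤ 1) :
    x ^ e ≤ max 1 x := by
  rcases le_total x 1 with hx | hx
  · exact (ENNReal.rpow_le_one hx he₀).trans (le_max_left _ _)
  · calc x ^ e ≤ x ^ (1 : ℝ) := ENNReal.rpow_le_rpow_of_exponent_le hx he₁
      _ = x := ENNReal.rpow_one x
      _ ≤ max 1 x := le_max_right _ _

lemma one_le_max_one_measure_mul_eLpNorm {α : Type*} [MeasurableSpace α] {μ : Measure α}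
    {f : α → ℝ} (hf : AEStronglyMeasurable f μ) (hf_one : ∫ x, f x ∂μ = 1) {s : Set α}
    (hfs : Function.support f ⊆ s) {q : ℝ≥0∞} (hq : 1 ≤ q) :
    1 ≤ max 1 (μ s) * eLpNorm f q μ := by
  have hexp₀ : 0 ≤ 1 / (1 : ℝ≥0∞).toReal - 1 / q.toReal := by
    rcases eq_or_ne q ∞ with rfl | hq_top
    · simp
    · have : 1 ≤ q.toReal := by simpa using ENNReal.toReal_mono hq_top hq
      simpa using inv_le_one_of_one_le₀ this
  calc (1 : ℝ≥0∞) = ‖∫ x, f x ∂μ‖ₑ := by simp [hf_one]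
    _ ≤ eLpNorm f 1 (μ.restrict s) := by
        rw [eLpNorm_restrict_eq_of_support_subset hfs, eLpNorm_one_eq_lintegral_enorm]
        exact enorm_integral_le_lintegral_enorm _
    _ ≤ eLpNorm f q (μ.restrict s)
          * μ.restrict s Set.univ ^ (1 / (1 : ℝ≥0∞).toReal - 1 / q.toReal) :=
        eLpNorm_le_eLpNorm_mul_rpow_measure_univ hq hf.restrict
    _ ≤ eLpNorm f q μ * max 1 (μ s) := by
        rw [Measure.restrict_apply_univ]
        gcongr
        · exact Measure.restrict_le_self
        · exact ENNReal.rpow_le_max_one hexp₀ (by simp)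
    _ = max 1 (μ s) * eLpNorm f q μ := mul_comm _ _

theorem mollification_commutator_estimate_torus_general (d : ℕ) :
    ∃ C : ℝ, 0 < C ∧
      ∀ (β₁ β₂ : ℝ), β₁ ∈ Set.Ioo (0:ℝ) 1 → β₂ ∈ Set.Ioo (0:ℝ) 1 →
      ∀ (p p₁ p₂ q : ℝ≥0∞), 1 ≤ p → 1 ≤ p₁ → 1 ≤ p₂ → p⁻¹ = p₁⁻¹ + p₂⁻¹ → p⁻¹ + q⁻¹ = 1 →
      ∀ ω : Ed d → ℝ, IsMollifier d ω →
      ∀ g₁ g₂ : Ed d → ℝ, Measurable g₁ → Measurable g₂ → PeriodicF g₁ → PeriodicF g₂ →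
        tLp d p₁ g₁ < ⊤ → tLp d p₂ g₂ < ⊤ →
      ∀ ε δ : ℝ, 0 < ε → ε ≤ δ →
        tLp d p (fun x => moll d ω ε (fun y => g₁ y * g₂ y) x - moll d ω ε g₁ x * moll d ω ε g₂ x)
          ≤ ENNReal.ofReal (C * ε ^ (β₁ + β₂)) * eLpNorm ω q (volume : Measure (Ed d)) *
              Vnorm d β₁ δ p₁ g₁ * Vnorm d β₂ δ p₂ g₂ := by
  set B := volume (Metric.closedBall (0 : Ed d) 1)
  refine ⟨2 * max 1 B.toReal, by positivity, ?_⟩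
  intro β₁ β₂ hβ₁ hβ₂ p p₁ p₂ q hp hp₁ hp₂ hppp hpq ω hω g₁ g₂ hg₁ hg₂ hper₁ hper₂
    hfin₁ hfin₂ ε δ hε hεδ
  have : p₁.HolderTriple p₂ p := ⟨hppp.symm⟩
  have := hω.isProbabilityMeasure_mollMeasure hε
  have hmem₁ : MemLp g₁ p₁ (torusMeasure d) := ⟨hg₁.aestronglyMeasurable, hfin₁⟩
  have hmem₂ : MemLp g₂ p₂ (torusMeasure d) := ⟨hg₂.aestronglyMeasurable, hfin₂⟩
  set ρ := mollMeasure d ω ε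
  have hint := (ae_integrable_comp_sub hg₁ hper₁ (hmem₁.integrable hp₁) ρ).and <|
    (ae_integrable_comp_sub hg₂ hper₂ (hmem₂.integrable hp₂) ρ).and <|
    ae_integrable_comp_sub (g := fun x => g₁ x * g₂ x) (hg₁.mul hg₂)
      (fun x k => by simp only [hper₁ x k, hper₂ x k]) ((hmem₂.mul' hmem₁).integrable hp) ρ
  have hcomm := eLpNorm_integral_mul_sub_integral_mul_integral_le hp hp₁ hp₂
    (u₁ := fun x y => g₁ (x - y)) (u₂ := fun x y => g₂ (x - y))
    (hg₁.comp (measurable_fst.sub measurable_snd))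
    (hg₂.comp (measurable_fst.sub measurable_snd)) hg₁ hg₂ hint
    (hω.ae_eLpNorm_comp_sub_sub_le_Vnorm hε hεδ hβ₁.1.le p₁)
    (hω.ae_eLpNorm_comp_sub_sub_le_Vnorm hε hεδ hβ₂.1.le p₂)
  have hωq : 1 ≤ max 1 B * eLpNorm ω q volume :=
    one_le_max_one_measure_mul_eLpNorm hω.smooth.continuous.aestronglyMeasurable hω.integral_one
      hω.support_subset (by simpa using le_add_self.trans_eq hpq)
  have hC : ENNReal.ofReal (2 * max 1 B.toReal * ε ^ (β₁ + β₂))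
      = 2 * max 1 B * (ENNReal.ofReal (ε ^ β₁) * ENNReal.ofReal (ε ^ β₂)) := by
    rw [ENNReal.ofReal_mul (by positivity), ENNReal.ofReal_mul (by positivity),
      ENNReal.ofReal_max, ENNReal.ofReal_one, ENNReal.ofReal_toReal measure_closedBall_lt_top.ne,
      ENNReal.ofReal_ofNat, Real.rpow_add hε, ENNReal.ofReal_mul (by positivity)]
  simp only [tLp, hω.moll_eq_integral_mollMeasure hε.le]
  calc _ ≤ _ := hcomm
    _ ≤ _ := le_mul_of_one_le_right' hωq
    _ = _ := by rw [hC]; ring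

/-- commutator estimate for mollification on the torus. -/
theorem mollification_commutator_estimate_torus (d : ℕ) (hd : 1 ≤ d) :
    ∃ C : ℝ, 0 < C ∧
      ∀ (β₁ β₂ : ℝ), β₁ ∈ Set.Ioo (0:ℝ) 1 → β₂ ∈ Set.Ioo (0:ℝ) 1 →
      ∀ (p p₁ p₂ q : ℝ≥0∞), 1 ≤ p → 1 ≤ p₁ → 1 ≤ p₂ → p⁻¹ = p₁⁻¹ + p₂⁻¹ → p⁻¹ + q⁻¹ = 1 →
      ∀ ω : Ed d → ℝ, IsMollifier d ω →
      ∀ g₁ g₂ : Ed d → ℝ, Measurable g₁ → Measurable g₂ → PeriodicF g₁ → PeriodicF g₂ →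
        tLp d p₁ g₁ < ⊤ → tLp d p₂ g₂ < ⊤ →
      ∀ ε δ : ℝ, 0 < ε → ε ≤ δ →
        tLp d p (fun x => moll d ω ε (fun y => g₁ y * g₂ y) x - moll d ω ε g₁ x * moll d ω ε g₂ x)
          ≤ ENNReal.ofReal (C * ε ^ (β₁ + β₂)) * eLpNorm ω q (volume : Measure (Ed d)) *
              Vnorm d β₁ δ p₁ g₁ * Vnorm d β₂ δ p₂ g₂ :=
  mollification_commutator_estimate_torus_general d
end

section
/- For every γ > 1 there exists a constant C = C(γ) such that for all real numbers a > 0 and b > −a, one has |(a+b)^γ − a^γ − γ a^{γ−1} b| ≤ C |b|^γ + C (a+b)^{γ−2} |b|^2. -/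
open Real

/-- Mean value theorem for rpow on a positive interval. -/
lemma rpow_mvt (p u v : ℝ) (hu : 0 < u) (huv : u < v) :
    ∃ c, u < c ∧ c < v ∧ v ^ p - u ^ p = p * c ^ (p - 1) * (v - u) := by
  obtain ⟨c, hc, hc'⟩ := exists_hasDerivAt_eq_slope (fun x => x ^ p)
    (fun x => p * x ^ (p - 1)) huv
    (fun x hx => (Real.hasDerivAt_rpow_const
      (Or.inl (ne_of_gt (lt_of_lt_of_le hu hx.1)))).continuousAt.continuousWithinAt)
    (fun x hx => Real.hasDerivAt_rpow_const (Or.inl (ne_of_gt (hu.trans hx.1))))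
  refine ⟨c, hc.1, hc.2, ?_⟩
  rw [hc', div_mul_cancel₀]
  exact sub_ne_zero.2 huv.ne'

lemma ratio_rpow_le (x y q r : ℝ) (hx : 0 < x) (hy : 0 < y) (h1 : x ≤ 3 * y)
    (h2 : y ≤ 3 * x) (hq1 : q ≤ r) (hq2 : -q ≤ r) : x ^ q ≤ 3 ^ r * y ^ q := by
  rcases le_or_gt 0 q with h | h
  · calc x ^ q ≤ (3 * y) ^ q := Real.rpow_le_rpow hx.le h1 h
      _ = 3 ^ q * y ^ q := Real.mul_rpow (by norm_num) hy.le
      _ ≤ 3 ^ r * y ^ q := by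
          have := (Real.rpow_le_rpow_left_iff (x := 3) (by norm_num)).mpr hq1
          exact mul_le_mul_of_nonneg_right this (Real.rpow_nonneg hy.le q)
  · have hyx : y / 3 ≤ x := by linarith
    calc x ^ q ≤ (y / 3) ^ q :=
          Real.rpow_le_rpow_of_nonpos (by linarith) hyx h.le
      _ = 3 ^ (-q) * y ^ q := by
          rw [div_eq_inv_mul, Real.mul_rpow (by norm_num) hy.le,
            Real.inv_rpow (by norm_num), ← Real.rpow_neg (by norm_num)]
      _ ≤ 3 ^ r * y ^ q := by
          have := (Real.rpow_le_rpow_left_iff (x := 3) (by norm_num)).mpr hq2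
          exact mul_le_mul_of_nonneg_right this (Real.rpow_nonneg hy.le q)

/-- The middle case `|b| ≤ a/2` via two mean value theorems. -/
lemma middle_case (γ a b : ℝ) (hγ : 1 < γ) (ha : 0 < a) (hb1 : -(a/2) ≤ b)
    (hb2 : b ≤ a/2) :
    |(a + b) ^ γ - a ^ γ - γ * a ^ (γ - 1) * b|
      ≤ γ * (γ - 1) * 3 ^ γ * (a + b) ^ (γ - 2) * b ^ 2 := by
  have hab : 0 < a + b := by linarith
  have key : ∃ d e, a / 2 < d ∧ d < 3 * (a / 2) ∧ |e| ≤ b ^ 2 ∧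
      (a + b) ^ γ - a ^ γ - γ * a ^ (γ - 1) * b = γ * (γ - 1) * d ^ (γ - 2) * e := by
    rcases lt_trichotomy b 0 with hb | hb | hb
    · obtain ⟨c, hc1, hc2, hc3⟩ := rpow_mvt γ (a + b) a hab (by linarith)
      obtain ⟨d, hd1, hd2, hd3⟩ := rpow_mvt (γ - 1) c a (by linarith) hc2
      refine ⟨d, b * (c - a), by linarith, by linarith, ?_, ?_⟩
      · rw [abs_mul, ← sq_abs b, sq]
        have h1 : |c - a| ≤ |b| := by
          rw [abs_of_nonpos (by linarith), abs_of_nonpos hb.le]; linarith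
        exact mul_le_mul_of_nonneg_left h1 (abs_nonneg b)
      · have h0 : (a + b) ^ γ - a ^ γ = γ * c ^ (γ - 1) * b := by
          linear_combination -hc3
        have h2 : c ^ (γ - 1) - a ^ (γ - 1) = (γ - 1) * d ^ (γ - 1 - 1) * (c - a) := by
          linear_combination -hd3
        have hee : γ - 1 - 1 = γ - 2 := by ring
        rw [hee] at h2
        rw [h0]
        linear_combination γ * b * h2
    · exact ⟨a, 0, by linarith, by linarith, by simp [sq_nonneg], by subst hb; simp⟩
    · obtain ⟨c, hc1, hc2, hc3⟩ := rpow_mvt γ a (a + b) ha (by linarith)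
      obtain ⟨d, hd1, hd2, hd3⟩ := rpow_mvt (γ - 1) a c ha hc1
      refine ⟨d, b * (c - a), by linarith, by linarith, ?_, ?_⟩
      · rw [abs_mul, ← sq_abs b, sq]
        have h1 : |c - a| ≤ |b| := by
          rw [abs_of_nonneg (by linarith), abs_of_nonneg hb.le]; linarith
        exact mul_le_mul_of_nonneg_left h1 (abs_nonneg b)
      · have h0 : (a + b) ^ γ - a ^ γ = γ * c ^ (γ - 1) * b := by
          linear_combination hc3
        have h2 : c ^ (γ - 1) - a ^ (γ - 1) = (γ - 1) * d ^ (γ - 1 - 1) * (c - a) := by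
          linear_combination hd3
        have hee : γ - 1 - 1 = γ - 2 := by ring
        rw [hee] at h2
        rw [h0]
        linear_combination γ * b * h2
  obtain ⟨d, e, hd1, hd2, he, heq⟩ := key
  rw [heq, abs_mul, abs_mul, abs_mul]
  have hγ0 : (0:ℝ) < γ := by linarith
  have hγ1 : (0:ℝ) < γ - 1 := by linarith
  have hd0 : 0 < d := by linarith
  have hdpow : d ^ (γ - 2) ≤ 3 ^ γ * (a + b) ^ (γ - 2) :=
    ratio_rpow_le d (a + b) (γ - 2) γ hd0 hab (by linarith) (by linarith)
      (by linarith) (by linarith)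
  calc |γ| * |γ - 1| * |d ^ (γ - 2)| * |e|
      = γ * (γ - 1) * d ^ (γ - 2) * |e| := by
        rw [abs_of_pos hγ0, abs_of_pos hγ1, abs_of_pos (Real.rpow_pos_of_pos hd0 _)]
    _ ≤ γ * (γ - 1) * (3 ^ γ * (a + b) ^ (γ - 2)) * (b ^ 2) := by
        apply mul_le_mul
        · exact mul_le_mul_of_nonneg_left hdpow (by positivity)
        · exact he
        · exact abs_nonneg e
        · positivity
    _ = γ * (γ - 1) * 3 ^ γ * (a + b) ^ (γ - 2) * b ^ 2 := by ring

/-- elementary power inequality. -/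
theorem rpow_taylor_remainder_bound (γ : ℝ) (hγ : 1 < γ) :
    ∃ C : ℝ, 0 < C ∧ ∀ a b : ℝ, 0 < a → -a < b →
      |(a + b) ^ γ - a ^ γ - γ * a ^ (γ - 1) * b|
        ≤ C * |b| ^ γ + C * (a + b) ^ (γ - 2) * |b| ^ 2 := by
  obtain ⟨C, hC⟩ : ∃ C : ℝ,
      C = 3 ^ γ + 2 ^ γ + γ * 2 ^ γ + γ * (γ - 1) * 3 ^ γ + 1 := ⟨_, rfl⟩
  have h3 : (0:ℝ) < 3 ^ γ := Real.rpow_pos_of_pos (by norm_num) γ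
  have h2 : (0:ℝ) < 2 ^ γ := Real.rpow_pos_of_pos (by norm_num) γ
  have hγ2 : 0 < γ * 2 ^ γ := mul_pos (by linarith) h2
  have hγ3 : 0 < γ * (γ - 1) * 3 ^ γ := mul_pos (mul_pos (by linarith) (by linarith)) h3
  have hC0 : 0 < C := by rw [hC]; linarith
  refine ⟨C, hC0, fun a b ha hb => ?_⟩
  have hab : 0 < a + b := by linarith
  have habγ : 0 < (a + b) ^ (γ - 2) := Real.rpow_pos_of_pos hab _
  have haγ : 0 < a ^ γ := Real.rpow_pos_of_pos ha _
  have haγ1 : 0 < a ^ (γ - 1) := Real.rpow_pos_of_pos ha _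
  have hbabs : |b| ^ 2 = b ^ 2 := sq_abs b
  rcases le_or_gt (|b|) (a / 2) with hmid | hbig
  · -- middle case
    have h1 := middle_case γ a b hγ ha (abs_le.mp hmid).1 (abs_le.mp hmid).2
    have hK : γ * (γ - 1) * 3 ^ γ ≤ C := by rw [hC]; linarith
    calc |(a + b) ^ γ - a ^ γ - γ * a ^ (γ - 1) * b|
        ≤ γ * (γ - 1) * 3 ^ γ * (a + b) ^ (γ - 2) * b ^ 2 := h1
      _ ≤ C * (a + b) ^ (γ - 2) * b ^ 2 :=
          mul_le_mul_of_nonneg_right (mul_le_mul_of_nonneg_right hK habγ.le) (sq_nonneg b)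
      _ ≤ C * |b| ^ γ + C * (a + b) ^ (γ - 2) * |b| ^ 2 := by
          rw [hbabs]
          have : 0 ≤ C * |b| ^ γ :=
            mul_nonneg hC0.le (Real.rpow_nonneg (abs_nonneg b) γ)
          linarith
  · -- outer cases
    have htri : |(a + b) ^ γ - a ^ γ - γ * a ^ (γ - 1) * b|
        ≤ (a + b) ^ γ + a ^ γ + γ * a ^ (γ - 1) * |b| := by
      calc |(a + b) ^ γ - a ^ γ - γ * a ^ (γ - 1) * b|
          ≤ |(a + b) ^ γ - a ^ γ| + |γ * a ^ (γ - 1) * b| := abs_sub _ _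
        _ ≤ ((a + b) ^ γ + a ^ γ) + γ * a ^ (γ - 1) * |b| := by
            apply add_le_add
            · calc |(a + b) ^ γ - a ^ γ| ≤ |(a + b) ^ γ| + |a ^ γ| := abs_sub _ _
                _ = (a + b) ^ γ + a ^ γ := by
                    rw [abs_of_pos (Real.rpow_pos_of_pos hab _), abs_of_pos haγ]
            · rw [abs_mul, abs_mul, abs_of_pos (by linarith : (0:ℝ) < γ),
                abs_of_pos haγ1]
    have hab2 : a ≤ 2 * |b| := by linarith
    have hb0 : 0 < |b| := by linarith
    have hbγ : 0 ≤ |b| ^ γ := Real.rpow_nonneg (abs_nonneg b) γ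
    have haγb : a ^ γ ≤ 2 ^ γ * |b| ^ γ := by
      calc a ^ γ ≤ (2 * |b|) ^ γ := Real.rpow_le_rpow ha.le hab2 (by linarith)
        _ = 2 ^ γ * |b| ^ γ := Real.mul_rpow (by norm_num) (abs_nonneg b)
    have haγ1b : γ * a ^ (γ - 1) * |b| ≤ γ * 2 ^ γ * |b| ^ γ := by
      have h1 : a ^ (γ - 1) ≤ (2 * |b|) ^ (γ - 1) :=
        Real.rpow_le_rpow ha.le hab2 (by linarith)
      have h2' : (2 * |b|) ^ (γ - 1) = 2 ^ (γ - 1) * |b| ^ (γ - 1) :=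
        Real.mul_rpow (by norm_num) (abs_nonneg b)
      have h3' : (2:ℝ) ^ (γ - 1) ≤ 2 ^ γ :=
        Real.rpow_le_rpow_of_exponent_le (by norm_num) (by linarith)
      have h4 : |b| ^ (γ - 1) * |b| = |b| ^ γ := by
        rw [← Real.rpow_add_one (ne_of_gt hb0)]; norm_num
      have h5 : 0 ≤ |b| ^ (γ - 1) := Real.rpow_nonneg (abs_nonneg b) _
      calc γ * a ^ (γ - 1) * |b| ≤ γ * (2 ^ (γ - 1) * |b| ^ (γ - 1)) * |b| := by
            rw [h2'] at h1
            exact mul_le_mul_of_nonneg_right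
              (mul_le_mul_of_nonneg_left h1 (by linarith)) (abs_nonneg b)
        _ = γ * 2 ^ (γ - 1) * (|b| ^ (γ - 1) * |b|) := by ring
        _ = γ * 2 ^ (γ - 1) * |b| ^ γ := by rw [h4]
        _ ≤ γ * 2 ^ γ * |b| ^ γ := by
            exact mul_le_mul_of_nonneg_right
              (mul_le_mul_of_nonneg_left h3' (by linarith)) hbγ
    rcases lt_or_ge b 0 with hbneg | hbpos
    · -- b < -a/2
      have habb : a + b ≤ |b| := by
        rw [abs_of_neg hbneg]; rw [abs_of_neg hbneg] at hbig; linarith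
      have hsplit : (a + b) ^ γ = (a + b) ^ (γ - 2) * (a + b) ^ (2:ℕ) := by
        rw [← Real.rpow_natCast (a + b) 2, ← Real.rpow_add hab]
        norm_num
      have hsq : (a + b) ^ (2:ℕ) ≤ |b| ^ (2:ℕ) :=
        sq_le_sq' (by linarith [abs_nonneg b]) habb
      have habγle : (a + b) ^ γ ≤ (a + b) ^ (γ - 2) * |b| ^ (2:ℕ) := by
        rw [hsplit]
        exact mul_le_mul_of_nonneg_left hsq habγ.le
      have hc1 : 2 ^ γ + γ * 2 ^ γ ≤ C := by rw [hC]; linarith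
      have hc2 : (1:ℝ) ≤ C := by rw [hC]; linarith
      have hsqnn : 0 ≤ (a + b) ^ (γ - 2) * |b| ^ 2 :=
        mul_nonneg habγ.le (sq_nonneg _)
      calc |(a + b) ^ γ - a ^ γ - γ * a ^ (γ - 1) * b|
          ≤ (a + b) ^ γ + a ^ γ + γ * a ^ (γ - 1) * |b| := htri
        _ ≤ (a + b) ^ (γ - 2) * |b| ^ 2 + 2 ^ γ * |b| ^ γ + γ * 2 ^ γ * |b| ^ γ := by
            have := habγle; push_cast at this ⊢; linarith
        _ ≤ C * |b| ^ γ + C * (a + b) ^ (γ - 2) * |b| ^ 2 := by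
            have e1 : (2 ^ γ + γ * 2 ^ γ) * |b| ^ γ ≤ C * |b| ^ γ :=
              mul_le_mul_of_nonneg_right hc1 hbγ
            have e2 : 1 * ((a + b) ^ (γ - 2) * |b| ^ 2) ≤
                C * ((a + b) ^ (γ - 2) * |b| ^ 2) :=
              mul_le_mul_of_nonneg_right hc2 hsqnn
            nlinarith [e1, e2]
    · -- b > a/2 > 0
      have habb : a + b ≤ 3 * |b| := by
        rw [abs_of_nonneg hbpos]; rw [abs_of_nonneg hbpos] at hab2; linarith
      have habγb : (a + b) ^ γ ≤ 3 ^ γ * |b| ^ γ := by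
        calc (a + b) ^ γ ≤ (3 * |b|) ^ γ := Real.rpow_le_rpow hab.le habb (by linarith)
          _ = 3 ^ γ * |b| ^ γ := Real.mul_rpow (by norm_num) (abs_nonneg b)
      have hc1 : 3 ^ γ + 2 ^ γ + γ * 2 ^ γ ≤ C := by rw [hC]; linarith
      have hsqnn : 0 ≤ C * (a + b) ^ (γ - 2) * |b| ^ 2 :=
        mul_nonneg (mul_nonneg hC0.le habγ.le) (sq_nonneg _)
      calc |(a + b) ^ γ - a ^ γ - γ * a ^ (γ - 1) * b|
          ≤ (a + b) ^ γ + a ^ γ + γ * a ^ (γ - 1) * |b| := htri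
        _ ≤ 3 ^ γ * |b| ^ γ + 2 ^ γ * |b| ^ γ + γ * 2 ^ γ * |b| ^ γ := by linarith
        _ ≤ C * |b| ^ γ + C * (a + b) ^ (γ - 2) * |b| ^ 2 := by
            have e1 : (3 ^ γ + 2 ^ γ + γ * 2 ^ γ) * |b| ^ γ ≤ C * |b| ^ γ :=
              mul_le_mul_of_nonneg_right hc1 hbγ
            nlinarith [e1]
end

section
/- Let γ > 1 and let ω be a standard mollifier on ℝ^d. There exists a constant C = C(γ) such that for every measurable ρ : T^d → (0,∞), every ε > 0, and almost every x ∈ T^d, one has |(ρ^γ ⋆ ω_ε)(x) − ((ρ ⋆ ω_ε)(x))^γ| ≤ C ∫_{ℝ^d} |ρ(x−y) − ρ(x)|^γ ω_ε(y) dy + C ∫_{ℝ^d} ρ(x−y)^{γ−2} |ρ(x−y) − ρ(x)|^2 ω_ε(y) dy + C ( ∫_{ℝ^d} ρ(x−y) ω_ε(y) dy )^{γ−2} ∫_{ℝ^d} |ρ(x−y) − ρ(x)|^2 ω_ε(y) dy, provided all the integrals on the right-hand side are finite (e.g. when ρ and ρ^{-1} are in L^∞(T^d)). -/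
open MeasureTheory Set Filter ENNReal

/-!
Let `R(a, b) = a ^ γ - b ^ γ - γ b ^ (γ - 1) (a - b)` be the first-order Taylor remainder of
`t ↦ t ^ γ` at `b`. The mollified kernel is a probability measure, so taking `b = ρ x` the linear
terms cancel and `(ρ ^ γ)_ε - (ρ_ε) ^ γ = ∫ R(ρ (x - y), ρ x) - R(ρ_ε x, ρ x)`. Both remainders are
controlled by the elementary bound `|R(a, b)| ≤ C (|a - b| ^ γ + a ^ (γ - 2) |a - b| ^ 2)`: the
first after integration, the second after Jensen's inequality
`|ρ_ε x - ρ x| ^ p ≤ ∫ |ρ (x - y) - ρ x| ^ p` for `p = γ` and `p = 2`.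
-/

noncomputable def rpowTaylorRem (γ a b : ℝ) : ℝ := a ^ γ - b ^ γ - γ * b ^ (γ - 1) * (a - b)

noncomputable def rpowTaylorConst (γ : ℝ) : ℝ :=
  γ * (γ - 1) * 2 ^ γ + (2 ^ γ + 3 ^ γ + γ * 3 ^ (γ - 1))

lemma exists_rpow_sub_rpow_eq (p : ℝ) {u v : ℝ} (hu : 0 < u) (hv : 0 < v) :
    ∃ ξ ∈ uIcc u v, u ^ p - v ^ p = p * ξ ^ (p - 1) * (u - v) := by
  wlog huv : u < v generalizing u v
  · rcases (not_lt.mp huv).eq_or_lt with rfl | hvu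
    · exact ⟨_, left_mem_uIcc, by ring⟩
    obtain ⟨ξ, hξ, hξeq⟩ := this hv hu hvu
    exact ⟨ξ, uIcc_comm u v ▸ hξ, by linarith⟩
  obtain ⟨ξ, hξ, hξeq⟩ := exists_hasDerivAt_eq_slope (fun t => t ^ p) (fun t => p * t ^ (p - 1))
    huv (continuousOn_id.rpow_const fun t ht => Or.inl (hu.trans_le ht.1).ne')
    fun t ht => Real.hasDerivAt_rpow_const (Or.inl (hu.trans ht.1).ne')
  refine ⟨ξ, Icc_subset_uIcc (Ioo_subset_Icc_self hξ), ?_⟩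
  rw [eq_div_iff (sub_ne_zero.mpr huv.ne')] at hξeq
  linarith

lemma rpow_sub_two_le_of_abs_sub_le_half {γ a η : ℝ} (hγ : 1 ≤ γ) (ha : 0 < a)
    (h : |η - a| ≤ a / 2) : η ^ (γ - 2) ≤ 2 ^ γ * a ^ (γ - 2) := by
  obtain ⟨hlo, hhi⟩ := abs_le.mp h
  have hη : 0 < η := by linarith
  rcases le_total 2 γ with hγ2 | hγ2
  · calc η ^ (γ - 2) ≤ (2 * a) ^ (γ - 2) := Real.rpow_le_rpow hη.le (by linarith) (by linarith)
      _ = 2 ^ (γ - 2) * a ^ (γ - 2) := Real.mul_rpow zero_le_two ha.le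
      _ ≤ 2 ^ γ * a ^ (γ - 2) := by
        gcongr
        · exact one_le_two
        · linarith
  · calc η ^ (γ - 2) ≤ (2⁻¹ * a) ^ (γ - 2) :=
          Real.rpow_le_rpow_of_nonpos (by positivity) (by linarith) (by linarith)
      _ = 2 ^ (2 - γ) * a ^ (γ - 2) := by
        rw [Real.mul_rpow (by norm_num) ha.le, Real.inv_rpow zero_le_two,
          ← Real.rpow_neg zero_le_two, neg_sub]
      _ ≤ 2 ^ γ * a ^ (γ - 2) := by
        gcongr
        · exact one_le_two
        · linarith

lemma abs_rpowTaylorRem_le_of_abs_sub_le_half {γ a b : ℝ} (hγ : 1 ≤ γ) (ha : 0 < a) (hb : 0 < b)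
    (hab : |a - b| ≤ a / 2) :
    |rpowTaylorRem γ a b| ≤ γ * (γ - 1) * 2 ^ γ * (a ^ (γ - 2) * |a - b| ^ 2) := by
  obtain ⟨ξ, hξ, hξeq⟩ := exists_rpow_sub_rpow_eq γ ha hb
  have hξ0 : 0 < ξ := (lt_min ha hb).trans_le hξ.1
  obtain ⟨η, hη, hηeq⟩ := exists_rpow_sub_rpow_eq (γ - 1) hξ0 hb
  rw [show γ - 1 - 1 = γ - 2 by ring] at hηeq
  have hξb : |ξ - b| ≤ |a - b| := by
    simpa only [abs_sub_comm] using abs_sub_right_of_mem_uIcc hξ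
  have hηa : |η - a| ≤ a / 2 :=
    (abs_sub_left_of_mem_uIcc (uIcc_subset_uIcc_right hξ hη)).trans (by rwa [abs_sub_comm])
  have hrem : rpowTaylorRem γ a b = γ * (γ - 1) * η ^ (γ - 2) * ((ξ - b) * (a - b)) := by
    rw [rpowTaylorRem, hξeq]
    linear_combination (γ * (a - b)) * hηeq
  have hγγ : 0 ≤ γ * (γ - 1) := mul_nonneg (by linarith) (by linarith)
  have hη0 : 0 ≤ η ^ (γ - 2) := Real.rpow_nonneg (by linarith [(abs_le.mp hηa).1]) _
  calc |rpowTaylorRem γ a b| = γ * (γ - 1) * η ^ (γ - 2) * (|ξ - b| * |a - b|) := by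
        rw [hrem, abs_mul _ ((ξ - b) * (a - b)), abs_mul (ξ - b),
          abs_of_nonneg (mul_nonneg hγγ hη0)]
    _ ≤ γ * (γ - 1) * (2 ^ γ * a ^ (γ - 2)) * (|a - b| * |a - b|) := by
        gcongr
        exact rpow_sub_two_le_of_abs_sub_le_half hγ ha hηa
    _ = γ * (γ - 1) * 2 ^ γ * (a ^ (γ - 2) * |a - b| ^ 2) := by ring

lemma abs_rpowTaylorRem_le_of_half_le_abs_sub {γ a b : ℝ} (hγ : 1 ≤ γ) (ha : 0 < a) (hb : 0 < b)
    (hab : a / 2 ≤ |a - b|) :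
    |rpowTaylorRem γ a b| ≤ (2 ^ γ + 3 ^ γ + γ * 3 ^ (γ - 1)) * |a - b| ^ γ := by
  have hd : 0 < |a - b| := by linarith
  have hb3 : b ≤ 3 * |a - b| := by linarith [neg_abs_le (a - b)]
  have haγ : a ^ γ ≤ 2 ^ γ * |a - b| ^ γ := by
    rw [← Real.mul_rpow zero_le_two hd.le]
    exact Real.rpow_le_rpow ha.le (by linarith) (by linarith)
  have hbγ : b ^ γ ≤ 3 ^ γ * |a - b| ^ γ := by
    rw [← Real.mul_rpow (by norm_num) hd.le]
    exact Real.rpow_le_rpow hb.le hb3 (by linarith)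
  have hbd : b ^ (γ - 1) * |a - b| ≤ 3 ^ (γ - 1) * |a - b| ^ γ :=
    calc b ^ (γ - 1) * |a - b| ≤ (3 * |a - b|) ^ (γ - 1) * |a - b| := by gcongr
      _ = 3 ^ (γ - 1) * |a - b| ^ γ := by
          rw [Real.mul_rpow (by norm_num) hd.le, Real.rpow_sub_one hd.ne', mul_assoc,
            div_mul_cancel₀ _ hd.ne']
  have hlin : |γ * b ^ (γ - 1) * (a - b)| ≤ γ * 3 ^ (γ - 1) * |a - b| ^ γ := by
    rw [abs_mul, abs_mul, abs_of_nonneg (by linarith : 0 ≤ γ),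
      abs_of_nonneg (Real.rpow_nonneg hb.le _), mul_assoc, mul_assoc]
    gcongr
  have := Real.rpow_nonneg ha.le γ
  have := Real.rpow_nonneg hb.le γ
  rw [rpowTaylorRem, abs_le]
  constructor <;> linarith [abs_le.mp hlin]

lemma rpowTaylorConst_pos {γ : ℝ} (hγ : 1 ≤ γ) : 0 < rpowTaylorConst γ := by
  have : 0 ≤ γ := by linarith
  have : 0 ≤ γ * (γ - 1) := mul_nonneg this (by linarith)
  unfold rpowTaylorConst
  positivity

lemma abs_rpowTaylorRem_le {γ a b : ℝ} (hγ : 1 ≤ γ) (ha : 0 < a) (hb : 0 < b) :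
    |rpowTaylorRem γ a b| ≤ rpowTaylorConst γ * (|a - b| ^ γ + a ^ (γ - 2) * |a - b| ^ 2) := by
  have : 0 ≤ γ := by linarith
  have : 0 ≤ γ * (γ - 1) := mul_nonneg this (by linarith)
  have hnear : 0 ≤ γ * (γ - 1) * 2 ^ γ := by positivity
  have hfar : 0 ≤ 2 ^ γ + 3 ^ γ + γ * 3 ^ (γ - 1) := by positivity
  have hX : 0 ≤ |a - b| ^ γ := by positivity
  have hY : 0 ≤ a ^ (γ - 2) * |a - b| ^ 2 := by positivity
  rw [rpowTaylorConst]
  rcases le_total |a - b| (a / 2) with hab | hab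
  · have := abs_rpowTaylorRem_le_of_abs_sub_le_half hγ ha hb hab
    nlinarith
  · have := abs_rpowTaylorRem_le_of_half_le_abs_sub hγ ha hb hab
    nlinarith

lemma integrable_rpowTaylorRem {α : Type*} [MeasurableSpace α] {μ : Measure α} [IsFiniteMeasure μ]
    {f : α → ℝ} {γ : ℝ} (hf : Integrable f μ) (hfγ : Integrable (fun x => f x ^ γ) μ) (b : ℝ) :
    Integrable (fun x => rpowTaylorRem γ (f x) b) μ :=
  (hfγ.sub (integrable_const _)).sub ((hf.sub (integrable_const _)).const_mul _)

section ProbabilityMeasure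

variable {α : Type*} [MeasurableSpace α] {μ : Measure α} [IsProbabilityMeasure μ] {f : α → ℝ}
  {b : ℝ}

lemma abs_integral_sub_rpow_le {p : ℝ} (hp : 1 ≤ p) (hf : Integrable f μ)
    (hfp : Integrable (fun x => |f x - b| ^ p) μ) :
    |∫ x, f x ∂μ - b| ^ p ≤ ∫ x, |f x - b| ^ p ∂μ :=
  calc |∫ x, f x ∂μ - b| ^ p = |∫ x, (f x - b) ∂μ| ^ p := by
        rw [integral_sub hf (integrable_const b), integral_const, probReal_univ, one_smul]
    _ ≤ (∫ x, |f x - b| ∂μ) ^ p := by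
        gcongr
        exact abs_integral_le_integral_abs
    _ ≤ ∫ x, |f x - b| ^ p ∂μ :=
        (convexOn_rpow hp).map_integral_le (f := fun x => |f x - b|)
          (fun t _ => (Real.continuousAt_rpow_const t p
            (Or.inr (zero_le_one.trans hp))).continuousWithinAt)
          isClosed_Ici (ae_of_all _ fun x => mem_Ici.mpr (abs_nonneg _))
          (hf.sub (integrable_const b)).abs hfp

lemma integral_rpowTaylorRem {γ : ℝ} (hf : Integrable f μ)
    (hfγ : Integrable (fun x => f x ^ γ) μ) (b : ℝ) :
    ∫ x, rpowTaylorRem γ (f x) b ∂μ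
      = ∫ x, f x ^ γ ∂μ - b ^ γ - γ * b ^ (γ - 1) * (∫ x, f x ∂μ - b) := by
  have h₁ : Integrable (fun x => f x ^ γ - b ^ γ) μ := hfγ.sub (integrable_const _)
  have h₂ : Integrable (fun x => γ * b ^ (γ - 1) * (f x - b)) μ :=
    (hf.sub (integrable_const _)).const_mul _
  simp only [rpowTaylorRem]
  rw [integral_sub h₁ h₂, integral_sub hfγ (integrable_const _), integral_const_mul,
    integral_sub hf (integrable_const _)]
  simp

variable {γ : ℝ}

lemma abs_integral_rpowTaylorRem_le (hγ : 1 ≤ γ) (hf0 : ∀ x, 0 < f x) (hb : 0 < b)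
    (hf : Integrable f μ) (hfγ : Integrable (fun x => f x ^ γ) μ)
    (hI₁ : Integrable (fun x => |f x - b| ^ γ) μ)
    (hI₂ : Integrable (fun x => f x ^ (γ - 2) * |f x - b| ^ 2) μ) :
    |∫ x, rpowTaylorRem γ (f x) b ∂μ|
      ≤ rpowTaylorConst γ * ∫ x, |f x - b| ^ γ ∂μ
        + rpowTaylorConst γ * ∫ x, f x ^ (γ - 2) * |f x - b| ^ 2 ∂μ :=
  calc |∫ x, rpowTaylorRem γ (f x) b ∂μ| ≤ ∫ x, |rpowTaylorRem γ (f x) b| ∂μ :=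
        abs_integral_le_integral_abs
    _ ≤ ∫ x, rpowTaylorConst γ * (|f x - b| ^ γ + f x ^ (γ - 2) * |f x - b| ^ 2) ∂μ :=
        integral_mono (integrable_rpowTaylorRem hf hfγ b).abs ((hI₁.add hI₂).const_mul _)
          fun x => abs_rpowTaylorRem_le hγ (hf0 x) hb
    _ = _ := by rw [integral_const_mul, integral_add hI₁ hI₂, mul_add]

lemma abs_rpowTaylorRem_integral_le (hγ : 1 ≤ γ) (hf0 : ∀ x, 0 < f x) (hb : 0 < b)
    (hf : Integrable f μ) (hI₁ : Integrable (fun x => |f x - b| ^ γ) μ)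
    (hI₃ : Integrable (fun x => |f x - b| ^ 2) μ) :
    |rpowTaylorRem γ (∫ x, f x ∂μ) b|
      ≤ rpowTaylorConst γ * ∫ x, |f x - b| ^ γ ∂μ
        + rpowTaylorConst γ * (∫ x, f x ∂μ) ^ (γ - 2) * ∫ x, |f x - b| ^ 2 ∂μ := by
  have hpos : 0 < ∫ x, f x ∂μ :=
    (integral_pos_iff_support_of_nonneg (fun x => (hf0 x).le) hf).mpr (by
      rw [Function.support_eq_univ fun x => (hf0 x).ne']; simp)
  have hjensen₂ : |∫ x, f x ∂μ - b| ^ 2 ≤ ∫ x, |f x - b| ^ 2 ∂μ := by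
    simpa only [Real.rpow_two] using
      abs_integral_sub_rpow_le one_le_two hf (by simpa only [Real.rpow_two] using hI₃)
  calc |rpowTaylorRem γ (∫ x, f x ∂μ) b|
      ≤ rpowTaylorConst γ * (|∫ x, f x ∂μ - b| ^ γ
          + (∫ x, f x ∂μ) ^ (γ - 2) * |∫ x, f x ∂μ - b| ^ 2) := abs_rpowTaylorRem_le hγ hpos hb
    _ ≤ rpowTaylorConst γ * (∫ x, |f x - b| ^ γ ∂μ
          + (∫ x, f x ∂μ) ^ (γ - 2) * ∫ x, |f x - b| ^ 2 ∂μ) := by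
        have := rpowTaylorConst_pos hγ
        gcongr
        exact abs_integral_sub_rpow_le hγ hf hI₁
    _ = _ := by ring

theorem abs_integral_rpow_sub_rpow_integral_le (hγ : 1 ≤ γ) (hf0 : ∀ x, 0 < f x) (hb : 0 < b)
    (hf : Integrable f μ) (hfγ : Integrable (fun x => f x ^ γ) μ)
    (hI₁ : Integrable (fun x => |f x - b| ^ γ) μ)
    (hI₂ : Integrable (fun x => f x ^ (γ - 2) * |f x - b| ^ 2) μ)
    (hI₃ : Integrable (fun x => |f x - b| ^ 2) μ) :
    |∫ x, f x ^ γ ∂μ - (∫ x, f x ∂μ) ^ γ|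
      ≤ 2 * rpowTaylorConst γ * ∫ x, |f x - b| ^ γ ∂μ
        + 2 * rpowTaylorConst γ * ∫ x, f x ^ (γ - 2) * |f x - b| ^ 2 ∂μ
        + 2 * rpowTaylorConst γ * (∫ x, f x ∂μ) ^ (γ - 2) * ∫ x, |f x - b| ^ 2 ∂μ := by
  have hsplit : ∫ x, f x ^ γ ∂μ - (∫ x, f x ∂μ) ^ γ
      = ∫ x, rpowTaylorRem γ (f x) b ∂μ - rpowTaylorRem γ (∫ x, f x ∂μ) b := by
    rw [integral_rpowTaylorRem hf hfγ, rpowTaylorRem]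
    ring
  have hC := (rpowTaylorConst_pos hγ).le
  have h₁ : 0 ≤ rpowTaylorConst γ * ∫ x, |f x - b| ^ γ ∂μ :=
    mul_nonneg hC (integral_nonneg fun x => by positivity)
  have h₂ : 0 ≤ rpowTaylorConst γ * ∫ x, f x ^ (γ - 2) * |f x - b| ^ 2 ∂μ :=
    mul_nonneg hC (integral_nonneg fun x => by have := hf0 x; positivity)
  have h₃ : 0 ≤ rpowTaylorConst γ * (∫ x, f x ∂μ) ^ (γ - 2) * ∫ x, |f x - b| ^ 2 ∂μ := by
    have : 0 ≤ ∫ x, f x ∂μ := integral_nonneg fun x => (hf0 x).le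
    have : 0 ≤ ∫ x, |f x - b| ^ 2 ∂μ := integral_nonneg fun x => by positivity
    positivity
  rw [hsplit]
  linarith [abs_sub (∫ x, rpowTaylorRem γ (f x) b ∂μ) (rpowTaylorRem γ (∫ x, f x ∂μ) b),
    abs_integral_rpowTaylorRem_le hγ hf0 hb hf hfγ hI₁ hI₂,
    abs_rpowTaylorRem_integral_le hγ hf0 hb hf hI₁ hI₃]

end ProbabilityMeasure

lemma ContinuousOn.integrable_comp_of_isCompact {α : Type*} [MeasurableSpace α]
    {μ : Measure α} [IsFiniteMeasure μ] {s : Set ℝ} {g : ℝ → ℝ} (hgs : ContinuousOn g s)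
    (hs : IsCompact s) (hg : Measurable g) {f : α → ℝ} (hf : Measurable f) (hfs : ∀ x, f x ∈ s) :
    Integrable (fun x => g (f x)) μ := by
  obtain ⟨C, hC⟩ := hs.exists_bound_of_continuousOn hgs
  exact .of_bound (hg.comp hf).aestronglyMeasurable C (ae_of_all _ fun x => hC _ (hfs x))

section Mollifier

variable {d : ℕ} {ω : Ed d → ℝ} {ε : ℝ}

lemma IsMollifier.continuous_mollKer (hω : IsMollifier d ω) :
    Continuous (mollKer d ω ε) :=
  continuous_const.mul (hω.smooth.continuous.comp (continuous_const_smul _))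

lemma IsMollifier.mollKer_nonneg_s9 (hω : IsMollifier d ω) (hε : 0 ≤ ε) (y : Ed d) :
    0 ≤ mollKer d ω ε y :=
  mul_nonneg (pow_nonneg (inv_nonneg.mpr hε) d) (hω.nonneg _)

lemma IsMollifier.integral_mollKer_s9 (hω : IsMollifier d ω) (hε : 0 < ε) :
    ∫ y, mollKer d ω ε y = 1 := by
  unfold mollKer
  rw [integral_const_mul, Measure.integral_comp_inv_smul, finrank_euclideanSpace_fin,
    hω.integral_one, smul_eq_mul, mul_one, abs_of_pos (by positivity), inv_pow,
    inv_mul_cancel₀ (by positivity)]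

lemma IsMollifier.integrable_mollKer (hω : IsMollifier d ω) (hε : 0 < ε) :
    Integrable (mollKer d ω ε) :=
  .of_integral_ne_zero (by simp [hω.integral_mollKer_s9 hε])

lemma IsMollifier.isProbabilityMeasure_mollMeasure_s9 (hω : IsMollifier d ω) (hε : 0 < ε) :
    IsProbabilityMeasure (mollMeasure d ω ε) := by
  constructor
  rw [mollMeasure, withDensity_apply _ MeasurableSet.univ, setLIntegral_univ,
    ← ofReal_integral_eq_lintegral_ofReal (hω.integrable_mollKer hε)
      (ae_of_all _ (hω.mollKer_nonneg_s9 hε.le)), hω.integral_mollKer_s9 hε, ENNReal.ofReal_one]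

lemma IsMollifier.integral_mollMeasure (hω : IsMollifier d ω) (hε : 0 ≤ ε) (g : Ed d → ℝ) :
    ∫ y, g y ∂mollMeasure d ω ε = ∫ y, g y * mollKer d ω ε y := by
  rw [mollMeasure, integral_withDensity_eq_integral_toReal_smul
    hω.continuous_mollKer.measurable.ennreal_ofReal (ae_of_all _ fun _ => ofReal_lt_top)]
  simp only [ENNReal.toReal_ofReal (hω.mollKer_nonneg_s9 hε _), smul_eq_mul, mul_comm]

lemma moll_eq_integral_mul (f : Ed d → ℝ) (x : Ed d) :
    moll d ω ε f x = ∫ y, f (x - y) * mollKer d ω ε y := by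
  simp only [moll, smul_eq_mul, mul_comm]

end Mollifier

/-- pointwise estimate for the mollification of `ρ^γ`. -/
theorem moll_rpow_sub_rpow_moll_pointwise_bound (γ : ℝ) (hγ : 1 < γ) :
    ∃ C : ℝ, 0 < C ∧
      ∀ (d : ℕ) (ω : Ed d → ℝ), IsMollifier d ω →
      ∀ ρ : Ed d → ℝ, Measurable ρ → PeriodicF ρ → (∀ x, 0 < ρ x) →
      (∃ m M : ℝ, 0 < m ∧ ∀ x, m ≤ ρ x ∧ ρ x ≤ M) →
      ∀ ε : ℝ, 0 < ε →
      ∀ᵐ x ∂(torusMeasure d),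
        |moll d ω ε (fun y => ρ y ^ γ) x - (moll d ω ε ρ x) ^ γ|
          ≤ C * (∫ y, |ρ (x - y) - ρ x| ^ γ * mollKer d ω ε y)
            + C * (∫ y, ρ (x - y) ^ (γ - 2) * |ρ (x - y) - ρ x| ^ 2 * mollKer d ω ε y)
            + C * (∫ y, ρ (x - y) * mollKer d ω ε y) ^ (γ - 2) *
                (∫ y, |ρ (x - y) - ρ x| ^ 2 * mollKer d ω ε y) := by
  refine ⟨2 * rpowTaylorConst γ, by linarith [rpowTaylorConst_pos hγ.le], ?_⟩
  rintro d ω hω ρ hρ - hρ0 ⟨m, M, hm, hmM⟩ ε hε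
  refine ae_of_all _ fun x => ?_
  have := hω.isProbabilityMeasure_mollMeasure_s9 hε
  have hmem : ∀ y, ρ (x - y) ∈ Icc m M := fun y => hmM (x - y)
  have hγ0 : 0 ≤ γ := by linarith
  have hrpow : ContinuousOn (fun t : ℝ => t ^ (γ - 2)) (Icc m M) :=
    continuousOn_id.rpow_const fun t ht => Or.inl (hm.trans_le ht.1).ne'
  have integrable {g : ℝ → ℝ} (hg : Measurable g) (hgs : ContinuousOn g (Icc m M)) :
      Integrable (fun y => g (ρ (x - y))) (mollMeasure d ω ε) :=
    hgs.integrable_comp_of_isCompact isCompact_Icc hg (hρ.comp (measurable_id.const_sub x)) hmem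
  have key := abs_integral_rpow_sub_rpow_integral_le (μ := mollMeasure d ω ε)
    (f := fun y => ρ (x - y)) hγ.le (fun y => hρ0 (x - y)) (hρ0 x)
    (integrable (g := id) measurable_id continuousOn_id)
    (integrable (g := fun t => t ^ γ) (by fun_prop) (by fun_prop (disch := assumption)))
    (integrable (g := fun t => |t - ρ x| ^ γ) (by fun_prop) (by fun_prop (disch := assumption)))
    (integrable (g := fun t => t ^ (γ - 2) * |t - ρ x| ^ 2) (by fun_prop) (hrpow.mul (by fun_prop)))
    (integrable (g := fun t => |t - ρ x| ^ 2) (by fun_prop) (by fun_prop))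
  rw [moll_eq_integral_mul, moll_eq_integral_mul]
  simpa only [hω.integral_mollMeasure hε.le] using key
end
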